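/- arXiv:0807.2040 — 2 statements merged into one kernel-verified Lean document; each statement's English description precedes it below -/
import Mathlib

section
/- Let κ be an integrable hyperkernel on a probability space (S, μ) and let f : S → [0,1] be measurable with f = 1 − e^{−S_κ(f)} pointwise and μ{x : f(x) > 0} > 0. Then T_κ(f)(x) ≥ f(x) for every x ∈ S, with strict inequality whenever f(x) > 0; consequently ∫_S (T_κ f)² dμ > ∫_S f² dμ (the left-hand side possibly being +∞). In particular, the L²(μ)-operator norm of T_κ exceeds 1. -/
open MeasureTheory ENNReal Filter Topology

/-- The nonlinear operator `S_κ` associated to a hyperkernel `κ = (κ_r)_{r ≥ 2}`;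
here `κ m` plays the role of `κ_{m+2}`. -/
noncomputable def Sop {S : Type*} [MeasurableSpace S] (μ : Measure S)
    (κ : (m : ℕ) → (Fin (m + 2) → S) → ℝ≥0∞) (f : S → ℝ) (x : S) : ℝ≥0∞ :=
  ∑' m : ℕ, ((m : ℝ≥0∞) + 2) *
    ∫⁻ y : Fin (m + 1) → S,
      κ m (Fin.cons x y) * ENNReal.ofReal (1 - ∏ i, (1 - f (y i)))
      ∂(Measure.pi fun _ => μ)

/-- The edge kernel `κ_e` of a hyperkernel. -/
noncomputable def edgeKernel {S : Type*} [MeasurableSpace S] (μ : Measure S)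
    (κ : (m : ℕ) → (Fin (m + 2) → S) → ℝ≥0∞) (x y : S) : ℝ≥0∞ :=
  ∑' m : ℕ, ((m : ℝ≥0∞) + 2) * ((m : ℝ≥0∞) + 1) *
    ∫⁻ z : Fin m → S, κ m (Fin.cons x (Fin.cons y z)) ∂(Measure.pi fun _ => μ)

/-- The linear operator `T_κ`. -/
noncomputable def Tlin {S : Type*} [MeasurableSpace S] (μ : Measure S)
    (κ : (m : ℕ) → (Fin (m + 2) → S) → ℝ≥0∞) (f : S → ℝ) (x : S) : ℝ≥0∞ :=
  ∫⁻ y, edgeKernel μ κ x y * ENNReal.ofReal (f y) ∂μ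

/-- All kernels of the family are measurable. -/
def HyperkernelMeasurable {S : Type*} [MeasurableSpace S]
    (κ : (m : ℕ) → (Fin (m + 2) → S) → ℝ≥0∞) : Prop :=
  ∀ m, Measurable (κ m)

/-- Each kernel is invariant under all permutations of its arguments. -/
def HyperkernelSymm {S : Type*} [MeasurableSpace S]
    (κ : (m : ℕ) → (Fin (m + 2) → S) → ℝ≥0∞) : Prop :=
  ∀ m (σ : Equiv.Perm (Fin (m + 2))) (v : Fin (m + 2) → S), κ m (v ∘ σ) = κ m v

/-- Integrability of the hyperkernel: `∑_{r≥2} r ∫_{S^r} κ_r < ∞`. -/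
def HyperkernelIntegrable {S : Type*} [MeasurableSpace S] (μ : Measure S)
    (κ : (m : ℕ) → (Fin (m + 2) → S) → ℝ≥0∞) : Prop :=
  ∑' m : ℕ, ((m : ℝ≥0∞) + 2) *
    ∫⁻ v : Fin (m + 2) → S, κ m v ∂(Measure.pi fun _ => μ) ≠ ⊤

/-- `expNeg a = e^{-a}` for `a ∈ [0,∞]`, with `e^{-∞} = 0`. -/
noncomputable def expNeg (a : ℝ≥0∞) : ℝ := if a = ⊤ then 0 else Real.exp (-a.toReal)

/-- The operator `Φ_κ(f) = 1 - e^{-S_κ(f)}`. -/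
noncomputable def Phi {S : Type*} [MeasurableSpace S] (μ : Measure S)
    (κ : (m : ℕ) → (Fin (m + 2) → S) → ℝ≥0∞) (f : S → ℝ) (x : S) : ℝ :=
  1 - expNeg (Sop μ κ f x)

/-- Irreducibility of the hyperkernel. -/
def HyperkernelIrreducible {S : Type*} [MeasurableSpace S] (μ : Measure S)
    (κ : (m : ℕ) → (Fin (m + 2) → S) → ℝ≥0∞) : Prop :=
  ∀ A : Set S, MeasurableSet A →
    (∀ᵐ p ∂(μ.prod μ), p ∈ A ×ˢ Aᶜ → edgeKernel μ κ p.1 p.2 = 0) →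
    μ A = 0 ∨ μ Aᶜ = 0

/-- The decreasing iterates `ρ_0 = 1`, `ρ_{t+1} = Φ_κ(ρ_t)`. -/
noncomputable def rhoSeq {S : Type*} [MeasurableSpace S] (μ : Measure S)
    (κ : (m : ℕ) → (Fin (m + 2) → S) → ℝ≥0∞) : ℕ → S → ℝ
  | 0 => fun _ => 1
  | t + 1 => Phi μ κ (rhoSeq μ κ t)

/-- The pointwise limit `ρ_κ` of the decreasing iterates `Φ_κ^t(1)`. -/
noncomputable def rhoFun {S : Type*} [MeasurableSpace S] (μ : Measure S)
    (κ : (m : ℕ) → (Fin (m + 2) → S) → ℝ≥0∞) : S → ℝ :=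
  fun x => ⨅ t : ℕ, rhoSeq μ κ t x

/-- The condition `‖T_κ‖ > 1` on the `L²(μ)` operator norm of `T_κ`. -/
def TopNormGtOne {S : Type*} [MeasurableSpace S] (μ : Measure S)
    (κ : (m : ℕ) → (Fin (m + 2) → S) → ℝ≥0∞) : Prop :=
  ∃ h : S → ℝ, Measurable h ∧ (∀ x, 0 ≤ h x) ∧
    (∫⁻ x, ENNReal.ofReal (h x) ^ 2 ∂μ) ≤ 1 ∧ 1 < ∫⁻ x, (Tlin μ κ h x) ^ 2 ∂μ


/-! Because `κ` is symmetric, the union bound `1 - ∏ᵢ (1 - f yᵢ) ≤ ∑ᵢ f yᵢ` bounds the `r`-th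
term of `S_κ(f)(x)` by `r (r - 1) ∫ κ_r(x, y, …) f(y)`, which is the `r`-th term of `T_κ(f)(x)`;
hence `S_κ f ≤ T_κ f`. As `1 - e^{-s} ≤ s`, with strict inequality when `1 - e^{-s} > 0`, a fixed
point `f = 1 - e^{-S_κ f}` satisfies `f ≤ T_κ f`, strictly on `{f > 0}`. Since this set has
positive measure, `‖f‖₂ < ‖T_κ f‖₂`, and `f / ‖f‖₂` witnesses `‖T_κ‖ > 1`. -/

lemma one_sub_prod_one_sub_le_sum {ι : Type*} (s : Finset ι) {a : ι → ℝ}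
    (h0 : ∀ i ∈ s, 0 ≤ a i) (h1 : ∀ i ∈ s, a i ≤ 1) :
    1 - ∏ i ∈ s, (1 - a i) ≤ ∑ i ∈ s, a i := by
  induction s using Finset.cons_induction with
  | empty => simp
  | cons j s hj ih =>
    simp only [Finset.mem_cons, forall_eq_or_imp] at h0 h1
    rw [Finset.prod_cons, Finset.sum_cons]
    have hP : ∏ i ∈ s, (1 - a i) ≤ 1 :=
      Finset.prod_le_one (fun i hi => by linarith [h1.2 i hi]) (fun i hi => by linarith [h0.2 i hi])
    nlinarith [ih h0.2 h1.2, h0.1]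

lemma ofReal_one_sub_expNeg_le (a : ℝ≥0∞) : ENNReal.ofReal (1 - expNeg a) ≤ a := by
  rcases eq_or_ne a ⊤ with rfl | ha
  · exact le_top
  · rw [expNeg, if_neg ha]
    refine (ENNReal.ofReal_le_ofReal ?_).trans_eq (ENNReal.ofReal_toReal ha)
    linarith [Real.add_one_le_exp (-a.toReal)]

lemma ofReal_one_sub_expNeg_lt {a : ℝ≥0∞} (h : 0 < 1 - expNeg a) :
    ENNReal.ofReal (1 - expNeg a) < a := by
  rcases eq_or_ne a ⊤ with rfl | ha
  · exact ENNReal.ofReal_lt_top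
  · rw [expNeg, if_neg ha] at h ⊢
    have hne : -a.toReal ≠ 0 := fun h0 => by simp [h0] at h
    have key : 1 - Real.exp (-a.toReal) < a.toReal := by linarith [Real.add_one_lt_exp hne]
    exact ((ENNReal.ofReal_lt_ofReal_iff (h.trans key)).2 key).trans_eq (ENNReal.ofReal_toReal ha)

lemma Fin.cons_comp_swap {α : Type*} {m : ℕ} (x : α) (y : Fin (m + 1) → α)
    (i : Fin (m + 1)) :
    (Fin.cons x (y ∘ Equiv.swap 0 i) : Fin (m + 2) → α)
      = Fin.cons x y ∘ Equiv.swap 1 i.succ := by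
  funext j
  induction j using Fin.cases with
  | zero =>
    rw [Function.comp_apply, Equiv.swap_apply_of_ne_of_ne (by simp) (Fin.succ_ne_zero i).symm]
    rfl
  | succ k =>
    rw [Function.comp_apply, show (1 : Fin (m + 2)) = Fin.succ 0 from rfl,
      (Fin.succ_injective _).swap_apply]
    rfl

section Measurability

variable {S : Type*} [MeasurableSpace S]

lemma measurable_finCons {n : ℕ} :
    Measurable fun p : S × (Fin n → S) => (Fin.cons p.1 p.2 : Fin (n + 1) → S) := by
  refine measurable_pi_lambda _ fun i => ?_
  induction i using Fin.cases with
  | zero => simpa using measurable_fst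
  | succ j =>
    simp only [Fin.cons_succ]
    exact (measurable_pi_apply j).comp measurable_snd

lemma lintegral_pi_fin_succ {n : ℕ} (μ : Measure S) [SigmaFinite μ]
    {F : (Fin (n + 1) → S) → ℝ≥0∞} (hF : Measurable F) :
    ∫⁻ y, F y ∂(Measure.pi fun _ => μ)
      = ∫⁻ a, ∫⁻ z, F (Fin.cons a z) ∂(Measure.pi fun _ => μ) ∂μ := by
  have e := (measurePreserving_piFinSuccAbove (fun _ : Fin (n + 1) => μ) 0).symm
  rw [← e.lintegral_comp_emb (MeasurableEquiv.measurableEmbedding _)]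
  exact (lintegral_prod _ (hF.comp e.measurable).aemeasurable).trans (by simp [Fin.consEquiv])

end Measurability

section Hyperkernel

variable {S : Type*} [MeasurableSpace S] {μ : Measure S} [SigmaFinite μ]
  {κ : (m : ℕ) → (Fin (m + 2) → S) → ℝ≥0∞}

lemma measurable_lintegral_cons_cons (hmeas : HyperkernelMeasurable κ) (m : ℕ) :
    Measurable fun p : S × S =>
      ∫⁻ z, κ m (Fin.cons p.1 (Fin.cons p.2 z)) ∂(Measure.pi fun _ => μ) :=
  ((hmeas m).comp (measurable_finCons.comp (measurable_fst.fst.prodMk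
    (measurable_finCons.comp (measurable_fst.snd.prodMk measurable_snd))))).lintegral_prod_right'

lemma measurable_edgeKernel (hmeas : HyperkernelMeasurable κ) :
    Measurable fun p : S × S => edgeKernel μ κ p.1 p.2 :=
  .tsum fun m => measurable_const.mul (measurable_lintegral_cons_cons hmeas m)

lemma measurable_Tlin (hmeas : HyperkernelMeasurable κ) {f : S → ℝ} (hf : Measurable f) :
    Measurable (Tlin μ κ f) :=
  Measurable.lintegral_prod_right'
    (f := fun p : S × S => edgeKernel μ κ p.1 p.2 * ENNReal.ofReal (f p.2))
    ((measurable_edgeKernel hmeas).mul (hf.comp measurable_snd).ennreal_ofReal)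

lemma Tlin_eq_tsum (hmeas : HyperkernelMeasurable κ) {f : S → ℝ} (hf : Measurable f) (x : S) :
    Tlin μ κ f x = ∑' m : ℕ, ((m : ℝ≥0∞) + 2) * ((m : ℝ≥0∞) + 1) *
      ∫⁻ a, (∫⁻ z, κ m (Fin.cons x (Fin.cons a z)) ∂(Measure.pi fun _ => μ)) *
        ENNReal.ofReal (f a) ∂μ := by
  simp only [Tlin, edgeKernel, ← ENNReal.tsum_mul_right]
  rw [lintegral_tsum fun m => ?_]
  · refine tsum_congr fun m => ?_
    rw [← lintegral_const_mul' _ _ (by finiteness)]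
    simp only [mul_assoc]
  · exact ((measurable_const.mul ((measurable_lintegral_cons_cons hmeas m).comp
      measurable_prodMk_left)).mul hf.ennreal_ofReal).aemeasurable

lemma HyperkernelSymm.lintegral_cons_mul_apply (hsymm : HyperkernelSymm κ)
    {m : ℕ} (g : S → ℝ≥0∞) (x : S) (i : Fin (m + 1)) :
    ∫⁻ y, κ m (Fin.cons x y) * g (y i) ∂(Measure.pi fun _ => μ)
      = ∫⁻ y, κ m (Fin.cons x y) * g (y 0) ∂(Measure.pi fun _ => μ) := by
  set e := MeasurableEquiv.arrowCongr' (Equiv.swap (0 : Fin (m + 1)) i).symm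
    (MeasurableEquiv.refl S)
  have he : MeasurePreserving e (Measure.pi fun _ => μ) (Measure.pi fun _ => μ) :=
    measurePreserving_arrowCongr' _ _ _ _ fun _ => MeasurePreserving.id μ
  rw [← he.lintegral_comp_emb e.measurableEmbedding]
  refine lintegral_congr fun y => ?_
  have hy : e y = y ∘ Equiv.swap 0 i := rfl
  rw [hy, Fin.cons_comp_swap, hsymm]
  simp

lemma lintegral_cons_mul_one_sub_prod_le (hmeas : HyperkernelMeasurable κ)
    (hsymm : HyperkernelSymm κ) {f : S → ℝ} (hf : Measurable f)
    (hf01 : ∀ x, 0 ≤ f x ∧ f x ≤ 1) (x : S) (m : ℕ) :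
    ∫⁻ y, κ m (Fin.cons x y) * ENNReal.ofReal (1 - ∏ i, (1 - f (y i)))
        ∂(Measure.pi fun _ => μ)
      ≤ ((m : ℝ≥0∞) + 1) *
        ∫⁻ a, (∫⁻ z, κ m (Fin.cons x (Fin.cons a z)) ∂(Measure.pi fun _ => μ)) *
          ENNReal.ofReal (f a) ∂μ := by
  have hκx : Measurable fun y : Fin (m + 1) → S => κ m (Fin.cons x y) :=
    (hmeas m).comp (measurable_finCons.comp measurable_prodMk_left)
  calc ∫⁻ y, κ m (Fin.cons x y) * ENNReal.ofReal (1 - ∏ i, (1 - f (y i)))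
        ∂(Measure.pi fun _ => μ)
      ≤ ∫⁻ y, ∑ i, κ m (Fin.cons x y) * ENNReal.ofReal (f (y i))
        ∂(Measure.pi fun _ => μ) := by
        refine lintegral_mono fun y => ?_
        rw [← Finset.mul_sum, ← ENNReal.ofReal_sum_of_nonneg fun i _ => (hf01 (y i)).1]
        gcongr
        exact one_sub_prod_one_sub_le_sum _ (fun i _ => (hf01 (y i)).1) fun i _ => (hf01 (y i)).2
    _ = ∑ i : Fin (m + 1),
          ∫⁻ y, κ m (Fin.cons x y) * ENNReal.ofReal (f (y i)) ∂(Measure.pi fun _ => μ) :=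
        lintegral_finsetSum _ fun i _ => hκx.mul (hf.comp (measurable_pi_apply i)).ennreal_ofReal
    _ = ((m : ℝ≥0∞) + 1) *
          ∫⁻ y, κ m (Fin.cons x y) * ENNReal.ofReal (f (y 0)) ∂(Measure.pi fun _ => μ) := by
        rw [Finset.sum_congr rfl fun i _ =>
          hsymm.lintegral_cons_mul_apply (fun a => ENNReal.ofReal (f a)) x i]
        simp only [Finset.sum_const, Finset.card_univ, Fintype.card_fin, nsmul_eq_mul]
        push_cast
        rfl
    _ = ((m : ℝ≥0∞) + 1) *
          ∫⁻ a, (∫⁻ z, κ m (Fin.cons x (Fin.cons a z)) ∂(Measure.pi fun _ => μ)) *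
            ENNReal.ofReal (f a) ∂μ := by
        rw [lintegral_pi_fin_succ μ (F := fun y => κ m (Fin.cons x y) * ENNReal.ofReal (f (y 0)))
          (hκx.mul (hf.comp (measurable_pi_apply 0)).ennreal_ofReal)]
        simp_rw [Fin.cons_zero, lintegral_mul_const' _ _ ENNReal.ofReal_ne_top]

lemma Sop_le_Tlin (hmeas : HyperkernelMeasurable κ) (hsymm : HyperkernelSymm κ)
    {f : S → ℝ} (hf : Measurable f) (hf01 : ∀ x, 0 ≤ f x ∧ f x ≤ 1) (x : S) :
    Sop μ κ f x ≤ Tlin μ κ f x := by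
  rw [Tlin_eq_tsum hmeas hf]
  refine ENNReal.tsum_le_tsum fun m => ?_
  rw [mul_assoc]
  gcongr
  exact lintegral_cons_mul_one_sub_prod_le hmeas hsymm hf hf01 x m

end Hyperkernel

section Norm

variable {S : Type*} [MeasurableSpace S] {μ : Measure S}
  {κ : (m : ℕ) → (Fin (m + 2) → S) → ℝ≥0∞}

lemma Tlin_mul_const (f : S → ℝ) {c : ℝ} (hc : 0 ≤ c) (x : S) :
    Tlin μ κ (fun y => f y * c) x = Tlin μ κ f x * ENNReal.ofReal c := by
  simp only [Tlin, ENNReal.ofReal_mul' hc, ← mul_assoc]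
  exact lintegral_mul_const' _ _ ENNReal.ofReal_ne_top

lemma topNormGtOne_of_lintegral_sq_lt {h : S → ℝ} (hm : Measurable h) (h0 : ∀ x, 0 ≤ h x)
    (hpos : ∫⁻ x, ENNReal.ofReal (h x) ^ 2 ∂μ ≠ 0)
    (hfin : ∫⁻ x, ENNReal.ofReal (h x) ^ 2 ∂μ ≠ ⊤)
    (hlt : ∫⁻ x, ENNReal.ofReal (h x) ^ 2 ∂μ < ∫⁻ x, Tlin μ κ h x ^ 2 ∂μ) :
    TopNormGtOne μ κ := by
  set I := ∫⁻ x, ENNReal.ofReal (h x) ^ 2 ∂μ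
  set c := Real.sqrt I⁻¹.toReal
  have hc : 0 ≤ c := Real.sqrt_nonneg _
  have hI : I⁻¹ ≠ ⊤ := ENNReal.inv_ne_top.2 hpos
  have hc2 : ENNReal.ofReal c ^ 2 = I⁻¹ := by
    rw [← ENNReal.ofReal_pow hc, Real.sq_sqrt ENNReal.toReal_nonneg, ENNReal.ofReal_toReal hI]
  refine ⟨fun x => h x * c, hm.mul_const c, fun x => mul_nonneg (h0 x) hc, ?_, ?_⟩
  · simp only [ENNReal.ofReal_mul' hc, mul_pow, hc2]
    rw [lintegral_mul_const' _ _ hI, ENNReal.mul_inv_cancel hpos hfin]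
  · simp only [Tlin_mul_const h hc, mul_pow, hc2]
    rw [lintegral_mul_const' _ _ hI, ← ENNReal.mul_inv_cancel hpos hfin]
    exact (ENNReal.mul_lt_mul_iff_left (ENNReal.inv_ne_zero.2 hfin) hI).2 hlt

end Norm

theorem stmt6_general {S : Type*} [MeasurableSpace S] (μ : Measure S) [IsProbabilityMeasure μ]
    (κ : (m : ℕ) → (Fin (m + 2) → S) → ℝ≥0∞)
    (hmeas : HyperkernelMeasurable κ) (hsymm : HyperkernelSymm κ)
    (f : S → ℝ) (hf : Measurable f) (hf01 : ∀ x, 0 ≤ f x ∧ f x ≤ 1)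
    (hfix : ∀ x, f x = Phi μ κ f x)
    (hpos : 0 < μ {x | 0 < f x}) :
    (∀ x, ENNReal.ofReal (f x) ≤ Tlin μ κ f x) ∧
    (∀ x, 0 < f x → ENNReal.ofReal (f x) < Tlin μ κ f x) ∧
    (∫⁻ x, ENNReal.ofReal (f x) ^ 2 ∂μ < ∫⁻ x, (Tlin μ κ f x) ^ 2 ∂μ) ∧
    TopNormGtOne μ κ := by
  have hle : ∀ x, ENNReal.ofReal (f x) ≤ Tlin μ κ f x := fun x => by
    rw [hfix x]
    exact (ofReal_one_sub_expNeg_le _).trans (Sop_le_Tlin hmeas hsymm hf hf01 x)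
  have hlt : ∀ x, 0 < f x → ENNReal.ofReal (f x) < Tlin μ κ f x := fun x hx => by
    rw [hfix x] at hx ⊢
    exact (ofReal_one_sub_expNeg_lt hx).trans_le (Sop_le_Tlin hmeas hsymm hf hf01 x)
  have hfin : ∫⁻ x, ENNReal.ofReal (f x) ^ 2 ∂μ ≠ ⊤ := by
    refine ((lintegral_mono (g := fun _ => 1) fun x => ?_).trans_lt (by simp)).ne
    exact pow_le_one₀ bot_le (ENNReal.ofReal_le_one.2 (hf01 x).2)
  have hsq : ∫⁻ x, ENNReal.ofReal (f x) ^ 2 ∂μ < ∫⁻ x, (Tlin μ κ f x) ^ 2 ∂μ :=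
    lintegral_strict_mono_of_ae_le_of_ae_lt_on ((measurable_Tlin hmeas hf).pow_const 2).aemeasurable
      hfin (ae_of_all _ fun x => pow_le_pow_left' (hle x) 2) hpos.ne'
      (ae_of_all _ fun x hx => ENNReal.pow_lt_pow_left two_ne_zero (hlt x hx))
  have hf2pos : ∫⁻ x, ENNReal.ofReal (f x) ^ 2 ∂μ ≠ 0 := by
    refine ((lintegral_pos_iff_support (hf.ennreal_ofReal.pow_const 2)).2 ?_).ne'
    convert hpos using 2
    ext x
    simp
  exact ⟨hle, hlt, hsq,
    topNormGtOne_of_lintegral_sq_lt hf (fun x => (hf01 x).1) hf2pos hfin hsq⟩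

/-- Lemma 2.6, `l_sc`, of the paper.
If `f : S → [0,1]` is measurable with `f = 1 - e^{-S_κ(f)}` pointwise and `μ{f > 0} > 0`,
then `f ≤ T_κ(f)` pointwise, strictly where `f > 0`, hence `∫ (T_κ f)² dμ > ∫ f² dμ`;
in particular the `L²(μ)` operator norm of `T_κ` exceeds `1`. -/
theorem stmt6 {S : Type*} [MeasurableSpace S] (μ : Measure S) [IsProbabilityMeasure μ]
    (κ : (m : ℕ) → (Fin (m + 2) → S) → ℝ≥0∞)
    (hmeas : HyperkernelMeasurable κ) (hsymm : HyperkernelSymm κ)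
    (hint : HyperkernelIntegrable μ κ)
    (f : S → ℝ) (hf : Measurable f) (hf01 : ∀ x, 0 ≤ f x ∧ f x ≤ 1)
    (hfix : ∀ x, f x = Phi μ κ f x)
    (hpos : 0 < μ {x | 0 < f x}) :
    (∀ x, ENNReal.ofReal (f x) ≤ Tlin μ κ f x) ∧
    (∀ x, 0 < f x → ENNReal.ofReal (f x) < Tlin μ κ f x) ∧
    (∫⁻ x, ENNReal.ofReal (f x) ^ 2 ∂μ < ∫⁻ x, (Tlin μ κ f x) ^ 2 ∂μ) ∧
    TopNormGtOne μ κ :=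
  stmt6_general μ κ hmeas hsymm f hf hf01 hfix hpos
end

section
/- Let κ be an integrable hyperkernel on a probability space (S, μ). Suppose there exist δ > 0 and a measurable f : S → [0,1] with μ{x : f(x) > 0} > 0 such that S_κ(f)(x) ≥ (1+δ)·f(x) for every x ∈ S. Then there exists a measurable g : S → [0,1] with Φ_κ(g) = g and ∫_S g dμ > 0. -/
open MeasureTheory ENNReal Filter Topology

/-! Scaling `f` by `ε = δ / (1 + δ)` gives a subsolution `h = ε f ≤ Φ_κ(h)`: the product
inequality `ε (1 - ∏ (1 - aᵢ)) ≤ 1 - ∏ (1 - ε aᵢ)` yields `S_κ(h) ≥ ε S_κ(f) ≥ (1 + δ) h`, and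
`1 - e^{-(1+δ)u} ≥ u` as long as `(1 + δ) u ≤ δ`. Since `Φ_κ` is monotone, the iterates
`Φ_κ^t(h)` increase to a limit, which is a fixed point by monotone convergence inside `S_κ` and
continuity of `a ↦ e^{-a}` on `[0, ∞]`. It dominates `h`, whose integral is positive. -/
lemma mul_one_sub_prod_one_sub_le {ι : Type*} (s : Finset ι) {a : ι → ℝ}
    (ha : ∀ i, 0 ≤ a i ∧ a i ≤ 1) {ε : ℝ} (hε₀ : 0 ≤ ε) (hε₁ : ε ≤ 1) :
    ε * (1 - ∏ i ∈ s, (1 - a i)) ≤ 1 - ∏ i ∈ s, (1 - ε * a i) := by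
  induction s using Finset.cons_induction with
  | empty => simp
  | cons j s hj ih =>
    rw [Finset.prod_cons, Finset.prod_cons]
    have hQ : 0 ≤ ∏ i ∈ s, (1 - a i) := Finset.prod_nonneg fun i _ => by linarith [(ha i).2]
    have hQP : ∏ i ∈ s, (1 - a i) ≤ ∏ i ∈ s, (1 - ε * a i) :=
      Finset.prod_le_prod (fun i _ => by linarith [(ha i).2])
        (fun i _ => by nlinarith [(ha i).1, (ha i).2])
    nlinarith [mul_le_mul_of_nonneg_left hQP (mul_nonneg hε₀ (ha j).1), (ha j).1, (ha j).2]

lemma prod_one_sub_le_prod_one_sub {ι : Type*} (s : Finset ι) {a b : ι → ℝ}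
    (hab : ∀ i, a i ≤ b i) (hb : ∀ i, b i ≤ 1) :
    ∏ i ∈ s, (1 - b i) ≤ ∏ i ∈ s, (1 - a i) :=
  Finset.prod_le_prod (fun i _ => by linarith [hb i]) (fun i _ => by linarith [hab i])

lemma le_one_sub_exp_neg_one_add_mul {δ u : ℝ} (hδ : 0 ≤ δ) (hu : 0 ≤ u)
    (hle : (1 + δ) * u ≤ δ) :
    u ≤ 1 - Real.exp (-((1 + δ) * u)) := by
  have hv : 0 ≤ (1 + δ) * u := by nlinarith
  have hexp : Real.exp (-((1 + δ) * u)) ≤ (1 + (1 + δ) * u)⁻¹ := by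
    rw [Real.exp_neg]
    exact inv_anti₀ (by positivity) (by linarith [Real.add_one_le_exp ((1 + δ) * u)])
  have hinv : (1 + (1 + δ) * u)⁻¹ ≤ 1 - u := by
    rw [inv_le_iff_one_le_mul₀ (by positivity)]
    nlinarith
  linarith

lemma tsum_iSup_eq_iSup_tsum {b : ℕ → ℕ → ℝ≥0∞} (hb : ∀ m, Monotone (b m)) :
    ∑' m, ⨆ t, b m t = ⨆ t, ∑' m, b m t := by
  simp_rw [← lintegral_count]
  exact lintegral_iSup (fun _ => measurable_from_nat) fun s t hst m => hb m hst

-- Through `EReal.exp`, continuity of `expNeg` at `⊤` comes for free.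
lemma expNeg_eq_toReal_inv_exp (a : ℝ≥0∞) : expNeg a = ((EReal.exp a)⁻¹).toReal := by
  rcases eq_or_ne a ⊤ with rfl | ha
  · simp [expNeg]
  · lift a to NNReal using ha
    simp [expNeg, Real.exp_neg, EReal.coe_nnreal_eq_coe_real, Real.exp_nonneg]

lemma inv_exp_ne_top (a : ℝ≥0∞) : (EReal.exp a)⁻¹ ≠ ⊤ := by simp

lemma continuous_expNeg : Continuous expNeg := by
  simp_rw [funext expNeg_eq_toReal_inv_exp]
  exact ENNReal.continuousOn_toReal.comp_continuous
    (ENNReal.continuous_exp.comp continuous_coe_ennreal_ereal).inv inv_exp_ne_top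

lemma antitone_expNeg : Antitone expNeg := fun a b hab => by
  simp only [expNeg_eq_toReal_inv_exp]
  exact ENNReal.toReal_mono (inv_exp_ne_top a) <| ENNReal.inv_le_inv.2 <|
    EReal.exp_monotone (EReal.coe_ennreal_le_coe_ennreal_iff.2 hab)

lemma expNeg_nonneg (a : ℝ≥0∞) : 0 ≤ expNeg a := by
  rw [expNeg_eq_toReal_inv_exp]; exact ENNReal.toReal_nonneg

lemma expNeg_le_one (a : ℝ≥0∞) : expNeg a ≤ 1 := by
  simpa [expNeg] using antitone_expNeg (zero_le : 0 ≤ a)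

lemma expNeg_ofReal {v : ℝ} (hv : 0 ≤ v) : expNeg (ENNReal.ofReal v) = Real.exp (-v) := by
  rw [expNeg, if_neg ENNReal.ofReal_ne_top, ENNReal.toReal_ofReal hv]

section Operators

variable {S : Type*} [MeasurableSpace S] {μ : Measure S}
  {κ : (m : ℕ) → (Fin (m + 2) → S) → ℝ≥0∞}

lemma measurable_fin_cons {m : ℕ} :
    Measurable fun p : S × (Fin (m + 1) → S) => (Fin.cons p.1 p.2 : Fin (m + 2) → S) := by
  refine measurable_pi_iff.2 fun i => ?_
  induction i using Fin.cases with
  | zero => simp only [Fin.cons_zero]; fun_prop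
  | succ j => simp only [Fin.cons_succ]; fun_prop

lemma measurable_ofReal_one_sub_prod_one_sub {m : ℕ} {f : S → ℝ} (hf : Measurable f) :
    Measurable fun y : Fin (m + 1) → S => ENNReal.ofReal (1 - ∏ i, (1 - f (y i))) := by
  fun_prop

lemma measurable_Sop [SigmaFinite μ] (hκ : HyperkernelMeasurable κ) {f : S → ℝ}
    (hf : Measurable f) : Measurable (Sop μ κ f) :=
  Measurable.tsum fun m => Measurable.const_mul (Measurable.lintegral_prod_right'
    (((hκ m).comp measurable_fin_cons).mul
      ((measurable_ofReal_one_sub_prod_one_sub hf).comp measurable_snd))) _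

lemma measurable_Phi [SigmaFinite μ] (hκ : HyperkernelMeasurable κ) {f : S → ℝ}
    (hf : Measurable f) : Measurable (Phi μ κ f) :=
  measurable_const.sub (continuous_expNeg.measurable.comp (measurable_Sop hκ hf))

lemma Phi_nonneg (f : S → ℝ) (x : S) : 0 ≤ Phi μ κ f x :=
  sub_nonneg.2 (expNeg_le_one _)

lemma Phi_le_one (f : S → ℝ) (x : S) : Phi μ κ f x ≤ 1 :=
  sub_le_self _ (expNeg_nonneg _)

lemma Sop_mono {f g : S → ℝ} (hfg : f ≤ g) (hg : ∀ x, g x ≤ 1) : Sop μ κ f ≤ Sop μ κ g := by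
  intro x
  refine ENNReal.tsum_le_tsum fun m => mul_le_mul_right (lintegral_mono fun y => ?_) _
  refine mul_le_mul_right (ENNReal.ofReal_le_ofReal (sub_le_sub_left ?_ 1)) _
  exact prod_one_sub_le_prod_one_sub _ (fun i => hfg (y i)) (fun i => hg (y i))

lemma Phi_mono {f g : S → ℝ} (hfg : f ≤ g) (hg : ∀ x, g x ≤ 1) : Phi μ κ f ≤ Phi μ κ g :=
  fun x => sub_le_sub_left (antitone_expNeg (Sop_mono hfg hg x)) 1

lemma ofReal_mul_Sop_le_Sop_const_mul {f : S → ℝ} (hf : ∀ x, 0 ≤ f x ∧ f x ≤ 1) {ε : ℝ}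
    (hε₀ : 0 ≤ ε) (hε₁ : ε ≤ 1) (x : S) :
    ENNReal.ofReal ε * Sop μ κ f x ≤ Sop μ κ (fun y => ε * f y) x := by
  rw [Sop, ← ENNReal.tsum_mul_left]
  refine ENNReal.tsum_le_tsum fun m => ?_
  rw [mul_left_comm, ← lintegral_const_mul' _ _ ENNReal.ofReal_ne_top]
  refine mul_le_mul_right (lintegral_mono fun y => ?_) _
  rw [mul_left_comm, ← ENNReal.ofReal_mul hε₀]
  exact mul_le_mul_right (ENNReal.ofReal_le_ofReal
    (mul_one_sub_prod_one_sub_le _ (fun i => hf (y i)) hε₀ hε₁)) _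

lemma Sop_eq_iSup_of_monotone (hκ : HyperkernelMeasurable κ) {g : ℕ → S → ℝ} {G : S → ℝ}
    (hgm : ∀ t, Measurable (g t)) (hmono : Monotone g) (hg : ∀ t x, g t x ≤ 1)
    (hG : ∀ x, Tendsto (fun t => g t x) atTop (𝓝 (G x))) (x : S) :
    Sop μ κ G x = ⨆ t, Sop μ κ (g t) x := by
  have hmono' : ∀ (m : ℕ) (y : Fin (m + 1) → S),
      Monotone fun t => ENNReal.ofReal (1 - ∏ i, (1 - g t (y i))) := fun m y s t hst =>
    ENNReal.ofReal_le_ofReal (sub_le_sub_left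
      (prod_one_sub_le_prod_one_sub _ (fun i => hmono hst (y i)) (fun i => hg t (y i))) 1)
  have hlim : ∀ (m : ℕ) (y : Fin (m + 1) → S),
      ⨆ t, ENNReal.ofReal (1 - ∏ i, (1 - g t (y i))) =
        ENNReal.ofReal (1 - ∏ i, (1 - G (y i))) := fun m y =>
    tendsto_nhds_unique (tendsto_atTop_iSup (hmono' m y)) <|
      (ENNReal.continuous_ofReal.tendsto _).comp <| tendsto_const_nhds.sub <|
        tendsto_finsetProd _ fun i _ => tendsto_const_nhds.sub (hG (y i))
  have hsection : ∀ m, Measurable fun y : Fin (m + 1) → S => κ m (Fin.cons x y) := fun m =>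
    (hκ m).comp (measurable_fin_cons.comp (measurable_const.prodMk measurable_id))
  simp only [Sop]
  rw [← tsum_iSup_eq_iSup_tsum fun m s t hst => mul_le_mul_right (lintegral_mono fun y =>
    mul_le_mul_right (hmono' m y hst) _) _]
  refine tsum_congr fun m => ?_
  have hint : ∫⁻ y, κ m (Fin.cons x y) * ENNReal.ofReal (1 - ∏ i, (1 - G (y i)))
        ∂Measure.pi (fun _ => μ) =
      ⨆ t, ∫⁻ y, κ m (Fin.cons x y) * ENNReal.ofReal (1 - ∏ i, (1 - g t (y i)))
        ∂Measure.pi (fun _ => μ) := by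
    have hmeas : ∀ t, Measurable fun y : Fin (m + 1) → S =>
        κ m (Fin.cons x y) * ENNReal.ofReal (1 - ∏ i, (1 - g t (y i))) := fun t =>
      (hsection m).mul (measurable_ofReal_one_sub_prod_one_sub (hgm t))
    rw [← lintegral_iSup hmeas fun s t hst y => mul_le_mul_right (hmono' m y hst) _]
    simp_rw [← ENNReal.mul_iSup, hlim]
  rw [hint, ENNReal.mul_iSup]

lemma tendsto_Phi_of_monotone (hκ : HyperkernelMeasurable κ) {g : ℕ → S → ℝ} {G : S → ℝ}
    (hgm : ∀ t, Measurable (g t)) (hmono : Monotone g) (hg : ∀ t x, g t x ≤ 1)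
    (hG : ∀ x, Tendsto (fun t => g t x) atTop (𝓝 (G x))) (x : S) :
    Tendsto (fun t => Phi μ κ (g t) x) atTop (𝓝 (Phi μ κ G x)) := by
  rw [Phi, Sop_eq_iSup_of_monotone hκ hgm hmono hg hG x]
  exact tendsto_const_nhds.sub <| (continuous_expNeg.tendsto _).comp <|
    tendsto_atTop_iSup fun s t hst => Sop_mono (hmono hst) (hg t) x

lemma le_Phi_of_le_Sop {δ : ℝ} (hδ : 0 ≤ δ) {h : S → ℝ} {x : S}
    (hh : 0 ≤ h x) (hδh : (1 + δ) * h x ≤ δ)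
    (hS : ENNReal.ofReal ((1 + δ) * h x) ≤ Sop μ κ h x) : h x ≤ Phi μ κ h x := by
  have hexp := antitone_expNeg hS
  rw [expNeg_ofReal (by positivity)] at hexp
  rw [Phi]
  linarith [le_one_sub_exp_neg_one_add_mul hδ hh hδh]

theorem exists_fixedPoint_Phi_ge [SigmaFinite μ] (hκ : HyperkernelMeasurable κ) {h : S → ℝ}
    (hm : Measurable h) (hle : h ≤ Phi μ κ h) :
    ∃ g : S → ℝ, Measurable g ∧ (∀ x, 0 ≤ g x ∧ g x ≤ 1) ∧ (∀ x, Phi μ κ g x = g x) ∧ h ≤ g := by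
  set g : ℕ → S → ℝ := fun t => (Phi μ κ)^[t] h
  have hg_succ : ∀ t, g (t + 1) = Phi μ κ (g t) := fun t =>
    Function.iterate_succ_apply' _ _ _
  have hg_le_one : ∀ t x, g t x ≤ 1 := by
    rintro (_ | t) x
    · exact (hle x).trans (Phi_le_one h x)
    · rw [hg_succ]; exact Phi_le_one _ x
  have hg_mono : Monotone g := by
    refine monotone_nat_of_le_succ fun t => ?_
    induction t with
    | zero => exact hle
    | succ t ih => rw [hg_succ, hg_succ (t + 1)]; exact Phi_mono ih (hg_le_one (t + 1))
  have hg_meas : ∀ t, Measurable (g t) := by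
    intro t
    induction t with
    | zero => exact hm
    | succ t ih => rw [hg_succ]; exact measurable_Phi hκ ih
  have hbdd : ∀ x, BddAbove (Set.range fun t => g t x) := fun x =>
    ⟨1, Set.forall_mem_range.2 fun t => hg_le_one t x⟩
  have hlim : ∀ x, Tendsto (fun t => g t x) atTop (𝓝 (⨆ t, g t x)) := fun x =>
    tendsto_atTop_ciSup (fun s t hst => hg_mono hst x) (hbdd x)
  refine ⟨fun x => ⨆ t, g t x,
    measurable_of_tendsto_metrizable' atTop hg_meas (tendsto_pi_nhds.2 hlim),
    fun x => ⟨?_, ciSup_le fun t => hg_le_one t x⟩, fun x => ?_, fun x => le_ciSup (hbdd x) 0⟩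
  · calc 0 ≤ g 1 x := by rw [hg_succ]; exact Phi_nonneg _ x
      _ ≤ ⨆ t, g t x := le_ciSup (hbdd x) 1
  · refine tendsto_nhds_unique (tendsto_Phi_of_monotone hκ hg_meas hg_mono hg_le_one hlim x) ?_
    exact ((hlim x).comp (tendsto_add_atTop_nat 1)).congr fun t => congrFun (hg_succ t) x

lemma const_mul_le_Phi_const_mul {δ : ℝ} (hδ : 0 < δ) {f : S → ℝ}
    (hf : ∀ x, 0 ≤ f x ∧ f x ≤ 1) (hgrow : ∀ x, ENNReal.ofReal ((1 + δ) * f x) ≤ Sop μ κ f x) :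
    (fun x => δ / (1 + δ) * f x) ≤ Phi μ κ (fun x => δ / (1 + δ) * f x) := by
  set ε := δ / (1 + δ) with hε_def
  have hε₀ : 0 < ε := by positivity
  have hε₁ : ε ≤ 1 := (div_le_one (by positivity)).2 (by linarith)
  have hεδ : (1 + δ) * ε = δ := by rw [hε_def]; field_simp
  intro x
  refine le_Phi_of_le_Sop (h := fun y => ε * f y) hδ.le (mul_nonneg hε₀.le (hf x).1) ?_ ?_
  · calc (1 + δ) * (ε * f x) = δ * f x := by rw [← mul_assoc, hεδ]
      _ ≤ δ := mul_le_of_le_one_right hδ.le (hf x).2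
  · calc ENNReal.ofReal ((1 + δ) * (ε * f x))
        = ENNReal.ofReal ε * ENNReal.ofReal ((1 + δ) * f x) := by
          rw [← ENNReal.ofReal_mul hε₀.le, mul_left_comm]
      _ ≤ ENNReal.ofReal ε * Sop μ κ f x := mul_le_mul_right (hgrow x) _
      _ ≤ Sop μ κ (fun y => ε * f y) x := ofReal_mul_Sop_le_Sop_const_mul hf hε₀.le hε₁ x

end Operators

theorem stmt8_general {S : Type*} [MeasurableSpace S] (μ : Measure S) [IsProbabilityMeasure μ]
    (κ : (m : ℕ) → (Fin (m + 2) → S) → ℝ≥0∞)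
    (hmeas : HyperkernelMeasurable κ)
    (δ : ℝ) (hδ : 0 < δ)
    (f : S → ℝ) (hf : Measurable f) (hf01 : ∀ x, 0 ≤ f x ∧ f x ≤ 1)
    (hpos : 0 < μ {x | 0 < f x})
    (hgrow : ∀ x, ENNReal.ofReal ((1 + δ) * f x) ≤ Sop μ κ f x) :
    ∃ g : S → ℝ, Measurable g ∧ (∀ x, 0 ≤ g x ∧ g x ≤ 1) ∧
      (∀ x, Phi μ κ g x = g x) ∧ 0 < ∫⁻ x, ENNReal.ofReal (g x) ∂μ := by
  set h : S → ℝ := fun x => δ / (1 + δ) * f x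
  obtain ⟨g, hgm, hg01, hfix, hhg⟩ :=
    exists_fixedPoint_Phi_ge hmeas (hf.const_mul _) (const_mul_le_Phi_const_mul hδ hf01 hgrow)
  refine ⟨g, hgm, hg01, hfix, ?_⟩
  have hsupp : {x | 0 < f x} ⊆ Function.support fun x => ENNReal.ofReal (h x) := fun x hx => by
    simpa [h] using mul_pos (by positivity) hx
  calc 0 < ∫⁻ x, ENNReal.ofReal (h x) ∂μ :=
        (lintegral_pos_iff_support (by fun_prop)).2 (hpos.trans_le (measure_mono hsupp))
    _ ≤ ∫⁻ x, ENNReal.ofReal (g x) ∂μ := lintegral_mono fun x => ENNReal.ofReal_le_ofReal (hhg x)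

/-- Lemma 2.8, `l_fup`, of the paper.
If there are `δ > 0` and a measurable `f : S → [0,1]` with `μ{f > 0} > 0` and
`S_κ(f) ≥ (1 + δ)·f` pointwise, then `Φ_κ` has a fixed point `g : S → [0,1]` with
`∫ g dμ > 0` (i.e. `ρ(κ) > 0`). -/
theorem stmt8 {S : Type*} [MeasurableSpace S] (μ : Measure S) [IsProbabilityMeasure μ]
    (κ : (m : ℕ) → (Fin (m + 2) → S) → ℝ≥0∞)
    (hmeas : HyperkernelMeasurable κ) (hsymm : HyperkernelSymm κ)
    (hint : HyperkernelIntegrable μ κ)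
    (δ : ℝ) (hδ : 0 < δ)
    (f : S → ℝ) (hf : Measurable f) (hf01 : ∀ x, 0 ≤ f x ∧ f x ≤ 1)
    (hpos : 0 < μ {x | 0 < f x})
    (hgrow : ∀ x, ENNReal.ofReal ((1 + δ) * f x) ≤ Sop μ κ f x) :
    ∃ g : S → ℝ, Measurable g ∧ (∀ x, 0 ≤ g x ∧ g x ≤ 1) ∧
      (∀ x, Phi μ κ g x = g x) ∧ 0 < ∫⁻ x, ENNReal.ofReal (g x) ∂μ :=
  stmt8_general μ κ hmeas δ hδ f hf hf01 hpos hgrow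
end
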